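/- Let scores h_1 ≥ h_2 ≥ ... ≥ h_n be real numbers (sorted in decreasing order) with h_K > h_{K+1}, let K < n and ε ∈ (0,1). Then λ = h_{K+1} is a minimizer of the function φ(λ) = ((K+ε)/n)·λ + (1/n)·Σ_{i=1}^n max(h_i − λ, 0). -/

import Mathlib

/-!
The function `μ ↦ c μ + ∑ i, max (h i - μ) 0` is convex and piecewise linear; its right slope
at `t` is `c - #{i | t < h i}` and its left slope is `c - #{i | t ≤ h i}`. So `t` minimizes it as
soon as `#{i | t < h i} ≤ c ≤ #{i | t ≤ h i}`. For sorted scores, `t = h K` (the `(K+1)`-st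
score, as `Fin n` is 0-indexed) and `c = K + ε` satisfy this, since at most `K` scores exceed
`h K` and at least `K + 1` are at least `h K`.
-/

open Finset

lemma max_sub_le_max_sub_add_ite {t μ : ℝ} (htμ : t ≤ μ) (a : ℝ) :
    max (a - t) 0 ≤ max (a - μ) 0 + if t < a then μ - t else 0 := by
  split_ifs with hta
  · exact max_le (by linarith [le_max_left (a - μ) 0]) (by linarith [le_max_right (a - μ) 0])
  · rw [max_eq_right (by linarith), add_zero]
    exact le_max_right (a - μ) 0

lemma max_sub_add_ite_le_max_sub {t μ : ℝ} (hμt : μ ≤ t) (a : ℝ) :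
    max (a - t) 0 + (if t ≤ a then t - μ else 0) ≤ max (a - μ) 0 := by
  split_ifs with hta
  · rw [max_eq_left (by linarith), max_eq_left (by linarith)]
    linarith
  · rw [max_eq_right (by linarith), zero_add]
    exact le_max_right (a - μ) 0

lemma sum_ite_const_zero_eq_card_mul {ι : Type*} [Fintype ι] (p : ι → Prop) [DecidablePred p]
    (d : ℝ) : ∑ i, (if p i then d else 0) = #{i | p i} * d := by
  rw [← sum_filter, sum_const, nsmul_eq_mul]

theorem linear_add_sum_max_sub_le {ι : Type*} [Fintype ι] (h : ι → ℝ) {c t : ℝ}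
    (hgt : (#{i | t < h i} : ℝ) ≤ c) (hge : c ≤ #{i | t ≤ h i}) (μ : ℝ) :
    c * t + ∑ i, max (h i - t) 0 ≤ c * μ + ∑ i, max (h i - μ) 0 := by
  rcases le_total t μ with htμ | hμt
  · have hsum := sum_le_sum fun i (_ : i ∈ univ) => max_sub_le_max_sub_add_ite htμ (h i)
    rw [sum_add_distrib, sum_ite_const_zero_eq_card_mul] at hsum
    linarith [mul_le_mul_of_nonneg_right hgt (sub_nonneg.2 htμ)]
  · have hsum := sum_le_sum fun i (_ : i ∈ univ) => max_sub_add_ite_le_max_sub hμt (h i)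
    rw [sum_add_distrib, sum_ite_const_zero_eq_card_mul] at hsum
    linarith [mul_le_mul_of_nonneg_right hge (sub_nonneg.2 hμt)]

section Antitone

variable {α : Type*} [LinearOrder α] [Fintype α] [LocallyFiniteOrderBot α] {h : α → ℝ}

lemma Antitone.card_filter_lt_le_card_Iio (hh : Antitone h) (a : α) :
    #{i | h a < h i} ≤ #(Iio a) :=
  card_le_card fun i hi => by
    simp only [mem_filter, mem_univ, true_and] at hi
    exact mem_Iio.2 (lt_of_not_ge fun hai => (hh hai).not_gt hi)

lemma Antitone.card_Iic_le_card_filter_le (hh : Antitone h) (a : α) :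
    #(Iic a) ≤ #{i | h a ≤ h i} :=
  card_le_card fun i hi => by
    simpa only [mem_filter, mem_univ, true_and] using hh (mem_Iic.1 hi)

end Antitone

theorem topK_threshold_minimizes
    (n K : ℕ) (hKn : K < n)
    (h : Fin n → ℝ)
    (hsort : ∀ i j : Fin n, i ≤ j → h j ≤ h i)
    (ε : ℝ) (hε : ε ∈ Set.Ioo (0:ℝ) 1) :
    ∀ μ : ℝ,
      ((K + ε) / n) * h ⟨K, hKn⟩ + (1 / n) * ∑ i, max (h i - h ⟨K, hKn⟩) 0
        ≤ ((K + ε) / n) * μ + (1 / n) * ∑ i, max (h i - μ) 0 := by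
  intro μ
  obtain ⟨hε0, hε1⟩ := hε
  have hanti : Antitone h := fun _ _ => hsort _ _
  have hgt : (#{i | h ⟨K, hKn⟩ < h i} : ℝ) ≤ K := by
    exact_mod_cast Fin.card_Iio _ ▸ hanti.card_filter_lt_le_card_Iio ⟨K, hKn⟩
  have hge : ((K + 1 : ℕ) : ℝ) ≤ #{i | h ⟨K, hKn⟩ ≤ h i} := by
    exact_mod_cast Fin.card_Iic _ ▸ hanti.card_Iic_le_card_filter_le ⟨K, hKn⟩
  push_cast at hge
  have key := linear_add_sum_max_sub_le h (c := K + ε) (by linarith) (by linarith) μ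
  have hn : (0 : ℝ) ≤ 1 / n := by positivity
  calc ((K : ℝ) + ε) / n * h ⟨K, hKn⟩ + 1 / n * ∑ i, max (h i - h ⟨K, hKn⟩) 0
      = 1 / n * ((K + ε) * h ⟨K, hKn⟩ + ∑ i, max (h i - h ⟨K, hKn⟩) 0) := by ring
    _ ≤ 1 / n * ((K + ε) * μ + ∑ i, max (h i - μ) 0) := mul_le_mul_of_nonneg_left key hn
    _ = ((K : ℝ) + ε) / n * μ + 1 / n * ∑ i, max (h i - μ) 0 := by ring
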